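/- Let L* be symmetric positive definite and H a symmetric matrix such that H_{ij} = 0 for all pairs i,j in the same connected component of the determinantal graph of L*. Then Tr((L*_J)^{-1} H_J) = 0 for all J ⊆ {1,...,N}, and Tr((I+L*)^{-1} H) = 0. -/

import Mathlib

open Matrix BigOperators

noncomputable def subm {N : ℕ} (L : Matrix (Fin N) (Fin N) ℝ) (J : Finset (Fin N)) :
    Matrix J J ℝ :=
  L.submatrix (fun i => (i : Fin N)) (fun j => (j : Fin N))

/-- `i` and `j` are connected in the determinantal graph of `L`
(edges `{i,j}` whenever `L i j ≠ 0`). -/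
def ConnectedIn {N : ℕ} (L : Matrix (Fin N) (Fin N) ℝ) (i j : Fin N) : Prop :=
  Relation.ReflTransGen (fun a b => L a b ≠ 0) i j

/-- Entries of the inverse of an invertible matrix with symmetric support vanish
between distinct connected components of its determinantal graph. -/
lemma inv_eq_zero_of_not_conn {n : Type*} [Fintype n] [DecidableEq n]
    (M : Matrix n n ℝ) (hM : IsUnit M.det)
    (hs : ∀ a b, M a b ≠ 0 → M b a ≠ 0)
    {i j : n} (h : ¬ Relation.ReflTransGen (fun a b => M a b ≠ 0) i j) :
    M⁻¹ i j = 0 := by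
  classical
  set C := Relation.ReflTransGen (fun a b => M a b ≠ 0) with hC
  set Q : Matrix n n ℝ := fun a b => if C a b then M⁻¹ a b else 0 with hQdef
  have hQ : M * Q = 1 := by
    ext a b
    by_cases hab : C a b
    · have h1 : (M * Q) a b = (M * M⁻¹) a b := by
        simp only [mul_apply]
        refine Finset.sum_congr rfl fun k _ => ?_
        by_cases hk : M a k = 0
        · simp [hk]
        · have hkb : C k b :=
            Relation.ReflTransGen.trans (Relation.ReflTransGen.single (hs a k hk)) hab
          simp [hQdef, hkb]
      rw [h1, Matrix.mul_nonsing_inv _ hM]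
    · have hab' : a ≠ b := fun hEq => hab (hEq ▸ Relation.ReflTransGen.refl)
      have h1 : (M * Q) a b = 0 := by
        simp only [mul_apply]
        refine Finset.sum_eq_zero fun k _ => ?_
        by_cases hk : M a k = 0
        · simp [hk]
        · have hkb : ¬ C k b := fun hcb =>
            hab ((Relation.ReflTransGen.single hk).trans hcb)
          simp [hQdef, hkb]
      rw [h1, Matrix.one_apply_ne hab']
  have := Matrix.inv_eq_right_inv hQ
  rw [this, hQdef]
  simp [h]

/-- A principal submatrix of a positive definite matrix is positive definite. -/
lemma posDef_subm {N : ℕ} {L : Matrix (Fin N) (Fin N) ℝ} (hL : L.PosDef)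
    (J : Finset (Fin N)) : (subm L J).PosDef := by
  classical
  have hLsym : ∀ a b : Fin N, L a b = L b a := by
    intro a b
    simpa using congrFun (congrFun hL.1 b) a
  refine posDef_iff_dotProduct_mulVec.mpr ⟨?_, ?_⟩
  · show (subm L J)ᴴ = subm L J
    ext a b
    simp only [subm, conjTranspose_apply, submatrix_apply, star_trivial]
    exact hLsym (b : Fin N) (a : Fin N)
  · intro x hx
    set x' : Fin N → ℝ := fun j => if h : j ∈ J then x ⟨j, h⟩ else 0 with hx'def
    have hx'J : ∀ i : J, x' (i : Fin N) = x i := fun i => by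
      simp [hx'def, i.2]
    have hx' : x' ≠ 0 := by
      intro h0
      apply hx
      funext i
      have := congrFun h0 (i : Fin N)
      simpa [hx'J i] using this
    have key : dotProduct (star x) (subm L J *ᵥ x) = dotProduct (star x') (L *ᵥ x') := by
      simp only [dotProduct, mulVec, Pi.star_apply, star_trivial]
      have inner : ∀ j : Fin N, (∑ k, L j k * x' k) = ∑ k : J, L j (k : Fin N) * x k := by
        intro j
        calc ∑ k, L j k * x' k = ∑ k ∈ J, L j k * x' k := by
              refine (Finset.sum_subset J.subset_univ ?_).symm
              intro k _ hk
              simp [hx'def, hk]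
          _ = ∑ k : J, L j (k : Fin N) * x' (k : Fin N) :=
              (Finset.sum_coe_sort J (fun k => L j k * x' k)).symm
          _ = ∑ k : J, L j (k : Fin N) * x k :=
              Finset.sum_congr rfl fun k _ => by rw [hx'J k]
      calc ∑ j : J, x j * ∑ k : J, (subm L J) j k * x k
            = ∑ j ∈ J, x' j * ∑ k, L j k * x' k := by
              rw [← Finset.sum_coe_sort J (fun j => x' j * ∑ k, L j k * x' k)]
              refine Finset.sum_congr rfl fun j _ => ?_
              rw [hx'J j, inner (j : Fin N)]
              rfl
        _ = ∑ j, x' j * ∑ k, L j k * x' k := by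
              refine Finset.sum_subset J.subset_univ ?_
              intro j _ hj
              simp [hx'def, hj]
    rw [key]
    exact hL.dotProduct_mulVec_pos hx'

/-- If a symmetric `H` vanishes on all pairs in the same connected component of
the determinantal graph of `L*`, then `Tr((L*_J)⁻¹ H_J) = 0` for all `J` and
`Tr((I+L*)⁻¹ H) = 0`. -/
theorem traces_vanish_on_null_space {N : ℕ} (Lstar H : Matrix (Fin N) (Fin N) ℝ)
    (hL : Lstar.PosDef) (hH : H.IsSymm)
    (hnull : ∀ i j : Fin N, ConnectedIn Lstar i j → H i j = 0) :
    (∀ J : Finset (Fin N), ((subm Lstar J)⁻¹ * subm H J).trace = 0) ∧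
      ((1 + Lstar)⁻¹ * H).trace = 0 := by
  classical
  have hLsymm : ∀ a b : Fin N, Lstar a b = Lstar b a := by
    intro a b
    simpa using congrFun (congrFun hL.1 b) a
  have hnull' : ∀ i j : Fin N, ConnectedIn Lstar i j → H j i = 0 := by
    intro i j hc
    rw [hH.apply]
    exact hnull i j hc
  constructor
  · intro J
    set M := subm Lstar J with hM
    have hMpd : M.PosDef := posDef_subm hL J
    have hMdet : IsUnit M.det := isUnit_iff_ne_zero.mpr hMpd.det_pos.ne'
    have hMsymm : ∀ a b : J, M a b ≠ 0 → M b a ≠ 0 := by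
      intro a b hab
      simpa [hM, subm, hLsymm (b : Fin N) (a : Fin N)] using hab
    rw [Matrix.trace]
    refine Finset.sum_eq_zero fun a _ => ?_
    rw [diag_apply, mul_apply]
    refine Finset.sum_eq_zero fun k _ => ?_
    by_cases hc : Relation.ReflTransGen (fun p q : J => M p q ≠ 0) a k
    · have hcL : ConnectedIn Lstar (a : Fin N) (k : Fin N) :=
        Relation.ReflTransGen.lift (fun p : J => (p : Fin N))
          (fun p q hpq => hpq) _ _ hc
      have : (subm H J) k a = 0 := hnull' _ _ hcL
      rw [this, mul_zero]
    · rw [inv_eq_zero_of_not_conn M hMdet hMsymm hc, zero_mul]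
  · set M := 1 + Lstar with hM
    have hMpd : M.PosDef := Matrix.PosDef.one.add hL
    have hMdet : IsUnit M.det := isUnit_iff_ne_zero.mpr hMpd.det_pos.ne'
    have hdiag : ∀ a : Fin N, Lstar a a ≠ 0 := by
      intro a
      have hx : (Pi.single a 1 : Fin N → ℝ) ≠ 0 := by
        intro h0
        simpa using congrFun h0 a
      have := hL.dotProduct_mulVec_pos hx
      have heq : dotProduct (star (Pi.single a 1 : Fin N → ℝ))
          (Lstar *ᵥ Pi.single a 1) = Lstar a a := by
        simp [dotProduct, mulVec, Pi.single_apply, Finset.mul_sum]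
      rw [heq] at this
      exact this.ne'
    have hstep : ∀ a b : Fin N, M a b ≠ 0 → Lstar a b ≠ 0 := by
      intro a b hab
      by_cases h : a = b
      · subst h; exact hdiag a
      · simpa [hM, Matrix.one_apply_ne h] using hab
    have hMsymm : ∀ a b : Fin N, M a b ≠ 0 → M b a ≠ 0 := by
      intro a b hab
      have : M a b = M b a := by
        by_cases h : a = b
        · subst h; rfl
        · simp [hM, Matrix.one_apply_ne h, Matrix.one_apply_ne (Ne.symm h), hLsymm a b]
      rwa [this] at hab
    rw [Matrix.trace]
    refine Finset.sum_eq_zero fun a _ => ?_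
    rw [diag_apply, mul_apply]
    refine Finset.sum_eq_zero fun k _ => ?_
    by_cases hc : Relation.ReflTransGen (fun p q : Fin N => M p q ≠ 0) a k
    · have hcL : ConnectedIn Lstar a k :=
        Relation.ReflTransGen.mono (fun p q hpq => hstep p q hpq) _ _ hc
      rw [hnull' _ _ hcL, mul_zero]
    · rw [inv_eq_zero_of_not_conn M hMdet hMsymm hc, zero_mul]
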